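/- Let φ: Γ → B be a strong formal subdivision of rank 0 with Γ lower Eulerian and B Eulerian. Then under the specialization c' ↦ c, d' ↦ d, e ↦ 1, the mixed cd-index Ω_φ(c',d',c,d,e) specializes to the cd-index Φ_Γ of Γ. -/

import Mathlib

open scoped Classical

noncomputable section

namespace CDIndex

variable {α β : Type}

/-- The natural rank function of a graded poset: `rho x` is one less than the largest
cardinality of a chain contained in `Set.Iic x` (i.e. the length of a maximal chain of
the interval `[0̂, x]`). -/
def rho [PartialOrder α] (x : α) : ℕ :=
  sSup {k : ℕ | ∃ s : Finset α,
    IsChain (· ≤ ·) (s : Set α) ∧ (s : Set α) ⊆ Set.Iic x ∧ s.card = k + 1}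

/-- A subset `S` of a poset is graded of rank `n` if every maximal chain of `S`
has exactly `n + 1` elements (i.e. length `n`). -/
def IsGradedSetOfRank [PartialOrder α] (S : Set α) (n : ℕ) : Prop :=
  ∀ s : Finset α, (s : Set α) ⊆ S → IsChain (· ≤ ·) (s : Set α) →
    (∀ t : Finset α, (t : Set α) ⊆ S → IsChain (· ≤ ·) (t : Set α) → s ⊆ t → s = t) →
    s.card = n + 1

/-- A poset is graded of rank `n` if every maximal chain has length `n`. -/
def IsGradedOfRank (α : Type) [PartialOrder α] (n : ℕ) : Prop :=
  IsGradedSetOfRank (Set.univ : Set α) n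

/-- Every interval `[s, t]` with `s < t`, `s, t ∈ S`, has equally many elements of even
rank and of odd rank. -/
def BalancedIntervalsIn [PartialOrder α] (S : Set α) : Prop :=
  ∀ s ∈ S, ∀ t ∈ S, s < t →
    {y ∈ Set.Icc s t | Even (rho y)}.ncard = {y ∈ Set.Icc s t | Odd (rho y)}.ncard

/-- An Eulerian poset of rank `n`: a graded poset with `0̂` and `1̂` in which every
interval of positive length has equally many elements of each parity of rank. -/
def IsEulerianOfRank (α : Type) [PartialOrder α] (n : ℕ) : Prop :=
  (∃ b : α, ∀ z, b ≤ z) ∧ (∃ t : α, ∀ z, z ≤ t) ∧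
    IsGradedOfRank α n ∧ BalancedIntervalsIn (Set.univ : Set α)

/-- A lower Eulerian poset of rank `n`: a graded poset with `0̂` all of whose intervals
are Eulerian. -/
def IsLowerEulerianOfRank (α : Type) [PartialOrder α] (n : ℕ) : Prop :=
  (∃ b : α, ∀ z, b ≤ z) ∧ IsGradedOfRank α n ∧ BalancedIntervalsIn (Set.univ : Set α)

/-- A lower order ideal `S` (of a poset) which is lower Eulerian of rank `n`. -/
def IsLowerEulerianSetOfRank [PartialOrder α] (S : Set α) (n : ℕ) : Prop :=
  IsGradedSetOfRank S n ∧ BalancedIntervalsIn S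

/-- The boundary of (a lower order ideal `S` of) a graded poset of rank `n`: the lower
order ideal generated by the rank `n - 1` elements which are covered by exactly one
element. -/
def boundaryIn [PartialOrder α] (S : Set α) (n : ℕ) : Set α :=
  {y | y ∈ S ∧ ∃ x ∈ S, rho x = n - 1 ∧ {z ∈ S | x ⋖ z}.ncard = 1 ∧ y ≤ x}

/-- The boundary `∂P` of a graded poset of rank `n`. -/
def boundary (α : Type) [PartialOrder α] (n : ℕ) : Set α :=
  boundaryIn (Set.univ : Set α) n

/-- `α` is a near-Eulerian poset of rank `n`: it is obtained from an Eulerian poset `Q`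
of rank `n + 1` by removing the maximal element and one element `q` of rank `n`. -/
def IsNearEulerianOfRank (α : Type) [PartialOrder α] [Finite α] (n : ℕ) : Prop :=
  ∃ (Q : Type) (_ : PartialOrder Q) (_ : Finite Q) (q top : Q),
    IsEulerianOfRank Q (n + 1) ∧ (∀ z, z ≤ top) ∧ rho q = n ∧ q ≠ top ∧
    Nonempty (α ≃o {x : Q // x ≠ q ∧ x ≠ top})

/-- `α` is (isomorphic to) the boundary of an Eulerian poset, where `α` has rank `n`
(so the Eulerian poset has rank `n + 1`). -/
def IsBoundaryOfEulerianOfRank (α : Type) [PartialOrder α] [Finite α] (n : ℕ) : Prop :=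
  ∃ (Q : Type) (_ : PartialOrder Q) (_ : Finite Q) (top : Q),
    IsEulerianOfRank Q (n + 1) ∧ (∀ z, z ≤ top) ∧
    Nonempty (α ≃o {x : Q // x ≠ top})

/-! ### Strong formal subdivisions -/

/-- A strong formal subdivision (of rank `0`, with the natural rank functions): an
order-preserving, rank-increasing, surjective map which is strongly surjective and
satisfies the alternating-sum condition on fibers. -/
def IsSFS {α β : Type} [PartialOrder α] [PartialOrder β] (φ : α → β) : Prop :=
  Monotone φ ∧ (∀ y, rho y ≤ rho (φ y)) ∧ Function.Surjective φ ∧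
  (∀ y x, φ y ≤ x → ∃ y', y ≤ y' ∧ φ y' = x ∧ rho y' = rho x) ∧
  (∀ y x, φ y ≤ x →
    (∑ᶠ y' ∈ {y' | φ y' = x ∧ y ≤ y'}, ((-1 : ℤ) ^ rho y')) = (-1) ^ rho x)

/-! ### The flag enumerator, the `ab`-index and the `cd`-index -/

variable (K : Type) [Field K] [CharZero K]

/-- The free noncommutative algebra `K⟨a, b⟩`. -/
abbrev FA := FreeAlgebra K (Fin 2)

/-- The letter `a`. -/
def la : FA K := FreeAlgebra.ι K 0

/-- The letter `b`. -/
def lb : FA K := FreeAlgebra.ι K 1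

/-- `c = a + b`. -/
def lc : FA K := la K + lb K

/-- `d = ab + ba`. -/
def ld : FA K := la K * lb K + lb K * la K

/-- The characteristic monomial `u_S = u_1 ⋯ u_n` of a set `S` of ranks, where
`u_i = b` if `i ∈ S` and `u_i = a` otherwise. -/
def uWord (n : ℕ) (S : Set ℕ) : FA K :=
  (List.ofFn fun i : Fin n => if (i : ℕ) + 1 ∈ S then lb K else la K).prod

/-- Chains of the subposet `S` which contain the element `b0` (intended: the minimal
element of `S`). -/
def chainsIn [PartialOrder α] (S : Set α) (b0 : α) : Set (Finset α) :=
  {C | (C : Set α) ⊆ S ∧ IsChain (· ≤ ·) (C : Set α) ∧ b0 ∈ C}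

/-- The flag enumerator `Υ` of the subposet `S` with minimal element `b0`, of rank `n`;
ranks are computed relative to `b0`. -/
def upsSet [PartialOrder α] (S : Set α) (b0 : α) (n : ℕ) : FA K :=
  ∑ᶠ C ∈ chainsIn S b0, uWord K n ((fun y => rho y - rho b0) '' (C : Set α))

/-- The substitution `a ↦ a - b`, `b ↦ b` turning the flag enumerator into the
`ab`-index. -/
def toAB : FA K →ₐ[K] FA K :=
  FreeAlgebra.lift K (fun i : Fin 2 => if i = 0 then la K - lb K else lb K)

/-- The `ab`-index `Ψ` of the subposet `S` with minimal element `b0`, of rank `n`: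
`Ψ(a,b) = Υ(a-b, b)`. -/
def psiS [PartialOrder α] (S : Set α) (b0 : α) (n : ℕ) : FA K :=
  toAB K (upsSet K S b0 n)

/-- The subalgebra `K⟨c, d⟩ ⊆ K⟨a, b⟩` generated by `c = a + b` and `d = ab + ba`. -/
def cdSub : Subalgebra K (FA K) := Algebra.adjoin K {lc K, ld K}

/-! ### The algebra `R^e_Ψ`, the subalgebra `R^e_Φ` and the mixed space `R_Ω` -/

open scoped TensorProduct

/-- The free algebra `K⟨a, b, e⟩` on the letters `a, b, e`. -/
abbrev FA3 := FreeAlgebra K (Fin 3)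

/-- The relations `e² = ea = eb = ae = be = 0`. -/
inductive ERel : FA3 K → FA3 K → Prop
  | ee : ERel (FreeAlgebra.ι K 2 * FreeAlgebra.ι K 2) 0
  | ea : ERel (FreeAlgebra.ι K 2 * FreeAlgebra.ι K 0) 0
  | eb : ERel (FreeAlgebra.ι K 2 * FreeAlgebra.ι K 1) 0
  | ae : ERel (FreeAlgebra.ι K 0 * FreeAlgebra.ι K 2) 0
  | be : ERel (FreeAlgebra.ι K 1 * FreeAlgebra.ι K 2) 0

/-- `R^e_Ψ = K⟨a, b, e⟩ / (e², ea, eb, ae, be)`. -/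
abbrev ReP := RingQuot (ERel K)

/-- The quotient map `K⟨a, b, e⟩ → R^e_Ψ`. -/
def mkRe : FA3 K →ₐ[K] ReP K := RingQuot.mkAlgHom K (ERel K)

/-- The letter `a` in `R^e_Ψ`. -/
def eA : ReP K := mkRe K (FreeAlgebra.ι K 0)

/-- The letter `b` in `R^e_Ψ`. -/
def eB : ReP K := mkRe K (FreeAlgebra.ι K 1)

/-- The letter `e` in `R^e_Ψ`. -/
def eE : ReP K := mkRe K (FreeAlgebra.ι K 2)

/-- `c = a + b` in `R^e_Ψ`. -/
def eC : ReP K := eA K + eB K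

/-- `d = ab + ba` in `R^e_Ψ`. -/
def eD : ReP K := eA K * eB K + eB K * eA K

/-- The subalgebra `R^e_Φ` of `R^e_Ψ`, with underlying space `K⟨c,d⟩ ⊕ Ke`. -/
def RePhi : Subalgebra K (ReP K) := Algebra.adjoin K {eC K, eD K, eE K}

/-- The element `e`, as an element of `R^e_Φ`. -/
def eESub : RePhi K := ⟨eE K, Algebra.subset_adjoin (by simp)⟩

/-- The image in `R^e_Ψ` of a word in the letters `a, b`. -/
def wordRe (l : List (Fin 2)) : ReP K :=
  mkRe K ((l.map fun i => FreeAlgebra.ι K (Fin.castSucc i)).prod)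

/-- The substitution `c' ↦ c, d' ↦ d` from `R'_Φ = K⟨c', d'⟩` (a free algebra on two
generators) into `K⟨a, b⟩`. -/
def cdToAB : FA K →ₐ[K] FA K :=
  FreeAlgebra.lift K (fun i : Fin 2 => if i = 0 then lc K else ld K)

/-- The substitution `c' ↦ c, d' ↦ d` from `R'_Φ = K⟨c', d'⟩` into `R^e_Ψ`. -/
def cdToRe : FA K →ₐ[K] ReP K :=
  FreeAlgebra.lift K (fun i : Fin 2 => if i = 0 then eC K else eD K)

/-- The inclusion `K⟨a, b⟩ → R^e_Ψ`, `a ↦ a`, `b ↦ b`. -/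
def abToRe : FA K →ₐ[K] ReP K :=
  FreeAlgebra.lift K (fun i : Fin 2 => if i = 0 then eA K else eB K)

/-- The mixed vector space `R_Ω = R'_Φ ⊗_K R^e_Φ`, where `R'_Φ = K⟨c', d'⟩`. -/
abbrev ROmega := (FA K) ⊗[K] (RePhi K)

/-- `L : B → K⟨c', d'⟩` is the family of primed local `cd`-indices `ℓ^Φ_{Γ_x}(c', d')` of
a strong formal subdivision `φ`: under `c' ↦ c, d' ↦ d` the polynomial `L x` becomes the
local `ab`-index `ℓ^Ψ_{Γ_x} = Ψ_{Γ_x} - Ψ_{∂Γ_x}·a`, where `Γ_x = φ⁻¹[0̂, x]` has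
boundary `∂Γ_x = φ⁻¹[0̂, x)`.  (`ℓ^Φ` of the one-element poset `Γ_{0̂}` is `1`.) -/
def IsLocalCdFamily [PartialOrder α] [OrderBot α] [PartialOrder β]
    (φ : α → β) (L : β → FA K) : Prop :=
  ∀ x : β, cdToAB K (L x) =
    psiS K (φ ⁻¹' Set.Iic x) ⊥ (rho x) - psiS K (φ ⁻¹' Set.Iio x) ⊥ (rho x - 1) * la K

/-- `P : B → B → R^e_Φ` is the family of `cd`-indices `Φ_{[y, x]}(c, d, e) ∈ R^e_Φ` of
the Eulerian intervals of `B`: for `y = x` (a one-element poset) it is `e`, and for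
`y < x` it is the `cd`-index `Φ_{∂[y,x]} = Ψ_{∂[y,x]}`, viewed inside `R^e_Ψ`. -/
def IsIntervalCdFamily [PartialOrder β] (P : β → β → RePhi K) : Prop :=
  ∀ y x : β,
    (y = x → P y x = eESub K) ∧
    (y < x → ((P y x : ReP K) =
      abToRe K (psiS K (Set.Ico y x) y (rho x - rho y - 1))))
/-- `sp2` is the linear specialization `R^e_Φ → K⟨a,b⟩` which is the identity on the
`cd`-part (i.e. sends a `cd`-polynomial in `R^e_Φ` to itself in `K⟨a,b⟩`) and sends `e`
to `1`. -/
def IsESpecialization (sp2 : RePhi K →ₗ[K] FA K) : Prop :=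
  sp2 (eESub K) = 1 ∧
  ∀ (z : RePhi K) (p : FA K), (z : ReP K) = cdToRe K p → sp2 z = cdToAB K p

end CDIndex

/-!
Under `c' ↦ c, d' ↦ d, e ↦ 1` the factor `Φ_{[x,1̂]}` becomes `1` for `x = 1̂` and the
`ab`-index `Ψ_{[x,1̂)}` otherwise, so `Ω_φ` specializes to
`ℓ^Ψ_Γ + ∑_{x < 1̂} ℓ^Ψ_{Γ_x} Ψ_{[x,1̂)}`, and it suffices to show
`∑_{z < x} ℓ^Ψ_{Γ_z} Ψ_{[z,x)} = Ψ_{φ⁻¹[0̂,x)}` for every `x` and `∂Γ = φ⁻¹[0̂,1̂)`.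

The first identity is proved for flag enumerators `Υ` (with `Ψ = Υ(a - b, b)`, so that
`ℓ^Ψ_{Γ_x}` comes from `Υ_{Γ_x} - Υ_{∂Γ_x}·c`) by induction on `x`: sorting the chains of
`Γ_x`, `∂Γ_x` and `[z, x)` by their greatest element, everything except the chains ending in
the fibers of `φ` below `x` telescopes away.

For the second, let `y ∈ Γ` have rank `n - 1`.  Every element above `y` is a cover of `y`
and is mapped to `1̂`, so the alternating-sum condition of the subdivision at `y ≤ 1̂` reads
`#{covers of y} · (-1)ⁿ + [φ y = 1̂] · (-1)ⁿ⁻¹ = (-1)ⁿ`: `y` has exactly one cover iff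
`φ y ≠ 1̂`.  Strong surjectivity lifts every coatom of `B` above `φ y` to such an element.
-/

namespace CDIndex

section Words

variable (K : Type) [Field K]

lemma uWord_congr {m : ℕ} {S T : Set ℕ} (h : ∀ i, 1 ≤ i → i ≤ m → (i ∈ S ↔ i ∈ T)) :
    uWord K m S = uWord K m T := by
  unfold uWord
  congr 2
  funext i
  rw [if_congr (h (i + 1) (by omega) (by omega)) rfl rfl]

lemma uWord_add (m₁ m₂ : ℕ) (S : Set ℕ) :
    uWord K (m₁ + m₂) S = uWord K m₁ S * uWord K m₂ {j | m₁ + j ∈ S} := by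
  simp [uWord, List.ofFn_add, add_assoc]

lemma uWord_eq_pow {m : ℕ} {S : Set ℕ} (h : ∀ i, 1 ≤ i → i ≤ m → i ∉ S) :
    uWord K m S = la K ^ m := by
  rw [uWord_congr K (T := ∅) fun i h₁ h₂ => iff_false_intro (h i h₁ h₂)]
  simp [uWord]

lemma uWord_of_isGreatest {m r : ℕ} {S : Set ℕ} (hS : IsGreatest S r) (hr : 1 ≤ r)
    (hrm : r ≤ m) : uWord K m S = uWord K (r - 1) S * lb K * la K ^ (m - r) := by
  obtain ⟨s, t, rfl, rfl⟩ : ∃ s t, r = s + 1 ∧ m = s + 1 + t := ⟨r - 1, m - r, by omega, by omega⟩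
  have hb : uWord K 1 {j | s + j ∈ S} = lb K := by simp [uWord, hS.1]
  have ha : uWord K t {j | s + 1 + j ∈ S} = la K ^ t :=
    uWord_eq_pow K fun i hi _ hiS => by have := hS.2 hiS; omega
  rw [uWord_add K (s + 1) t, uWord_add K s 1, hb, ha, Nat.add_sub_cancel, Nat.add_sub_cancel_left]

end Words

section Rank

variable {γ : Type} [PartialOrder γ] [Finite γ]

/-- `rho x` is the supremum of this set. -/
def chainLengths (x : γ) : Set ℕ :=
  {k | ∃ s : Finset γ, IsChain (· ≤ ·) (s : Set γ) ∧ (s : Set γ) ⊆ Set.Iic x ∧ s.card = k + 1}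

lemma bddAbove_chainLengths (x : γ) : BddAbove (chainLengths x) := by
  have := Fintype.ofFinite γ
  refine ⟨Fintype.card γ, fun k ⟨s, _, _, hs⟩ => ?_⟩
  have := s.card_le_univ
  omega

lemma exists_chain_card_eq_rho (x : γ) : ∃ s : Finset γ,
    IsChain (· ≤ ·) (s : Set γ) ∧ (s : Set γ) ⊆ Set.Iic x ∧ s.card = rho x + 1 :=
  Nat.sSup_mem (s := chainLengths x) ⟨0, {x}, by simp, by simp, rfl⟩ (bddAbove_chainLengths x)

lemma card_le_rho_add_one {x : γ} {s : Finset γ} (hc : IsChain (· ≤ ·) (s : Set γ))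
    (hs : (s : Set γ) ⊆ Set.Iic x) : s.card ≤ rho x + 1 := by
  obtain h | h := Nat.eq_zero_or_pos s.card
  · omega
  · have : s.card - 1 ≤ rho x :=
      le_csSup (bddAbove_chainLengths x) ⟨s, hc, hs, (Nat.sub_add_cancel h).symm⟩
    omega

lemma rho_strictMono : StrictMono (rho : γ → ℕ) := by
  intro u v huv
  obtain ⟨s, hc, hs, hcard⟩ := exists_chain_card_eq_rho u
  have hv : v ∉ s := fun hv => (hs hv).not_gt huv
  have hsv : (s : Set γ) ⊆ Set.Iic v := hs.trans (Set.Iic_subset_Iic.2 huv.le)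
  have := card_le_rho_add_one (x := v) (s := insert v s)
    (by simpa using hc.insert fun b hb _ => Or.inr (hsv hb))
    (by simpa using Set.insert_subset_iff.2 ⟨Set.self_mem_Iic, hsv⟩)
  rw [Finset.card_insert_of_notMem hv] at this
  omega

lemma rho_mono : Monotone (rho : γ → ℕ) := rho_strictMono.monotone

@[simp]
lemma rho_bot [OrderBot γ] : rho (⊥ : γ) = 0 := by
  obtain ⟨s, -, hs, hcard⟩ := exists_chain_card_eq_rho (⊥ : γ)
  have : s ⊆ {⊥} := fun z hz => Finset.mem_singleton.2 (le_bot_iff.1 (hs hz))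
  have := Finset.card_le_card this
  simp only [Finset.card_singleton] at this
  omega

variable {n : ℕ}

lemma IsGradedOfRank.exists_superset_card_eq (hG : IsGradedOfRank γ n) {s : Finset γ}
    (hs : IsChain (· ≤ ·) (s : Set γ)) :
    ∃ t : Finset γ, s ⊆ t ∧ IsChain (· ≤ ·) (t : Set γ) ∧ t.card = n + 1 := by
  obtain ⟨M, hM, hsM⟩ := hs.exists_maxChain
  have hfin := Set.toFinite M
  refine ⟨hfin.toFinset, by simpa using hsM, by simpa using hM.1, hG _ (Set.subset_univ _)
    (by simpa using hM.1) fun t _ ht hMt => ?_⟩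
  exact Finset.coe_injective (by simpa using hM.2 ht (by simpa using hMt))

lemma IsGradedOfRank.card_le (hG : IsGradedOfRank γ n) {s : Finset γ}
    (hs : IsChain (· ≤ ·) (s : Set γ)) : s.card ≤ n + 1 := by
  obtain ⟨t, hst, -, ht⟩ := hG.exists_superset_card_eq hs
  exact ht ▸ Finset.card_le_card hst

lemma IsGradedOfRank.rho_le (hG : IsGradedOfRank γ n) (x : γ) : rho x ≤ n := by
  obtain ⟨s, hc, -, hs⟩ := exists_chain_card_eq_rho x
  have := hG.card_le hc
  omega

lemma IsGradedOfRank.rho_top [OrderTop γ] (hG : IsGradedOfRank γ n) : rho (⊤ : γ) = n := by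
  obtain ⟨t, -, htc, ht⟩ := hG.exists_superset_card_eq (s := {⊤}) (by simp)
  have := card_le_rho_add_one htc fun z _ => le_top (a := z)
  have := hG.rho_le ⊤
  omega

/-- A maximal chain through a coatom `w` has all its elements but `⊤` below `w`. -/
lemma IsGradedOfRank.rho_of_covBy_top [OrderTop γ] (hG : IsGradedOfRank γ n) {w : γ}
    (hw : w ⋖ ⊤) : rho w = n - 1 := by
  obtain ⟨t, hwt, htc, ht⟩ := hG.exists_superset_card_eq (s := {w, ⊤})
    (by simpa using IsChain.pair (r := (· ≤ ·)) (le_top (a := w)))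
  have hle : ((t.erase ⊤ : Finset γ) : Set γ) ⊆ Set.Iic w := by
    intro z hz
    simp only [Finset.coe_erase, Set.mem_sdiff, Finset.mem_coe, Set.mem_singleton_iff] at hz
    rcases eq_or_ne z w with rfl | hzw
    · exact le_rfl
    · refine (htc hz.1 (hwt (by simp)) hzw).resolve_right fun hwz => ?_
      exact hw.2 (lt_of_le_of_ne hwz (Ne.symm hzw)) (lt_top_iff_ne_top.2 hz.2)
  have := card_le_rho_add_one (htc.mono (by simp)) hle
  rw [Finset.card_erase_of_mem (hwt (by simp)), ht] at this
  have := rho_strictMono hw.lt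
  rw [hG.rho_top] at this
  omega

lemma IsGradedOfRank.covBy_of_rho_eq (hG : IsGradedOfRank γ n) {x z : γ}
    (hx : rho x = n - 1) (hxz : x < z) : x ⋖ z ∧ rho z = n := by
  have := rho_strictMono hxz
  have := hG.rho_le z
  refine ⟨⟨hxz, fun c hxc hcz => ?_⟩, by omega⟩
  have := rho_strictMono hxc
  have := rho_strictMono hcz
  omega

end Rank

section Chains

open Finset

variable (K : Type) [Field K] {γ : Type} [PartialOrder γ]

lemma exists_isGreatest_of_isChain {s : Finset γ} (hs : s.Nonempty)
    (hc : IsChain (· ≤ ·) (s : Set γ)) : ∃ y, IsGreatest (s : Set γ) y :=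
  let ⟨y, hy⟩ := s.exists_maximal hs
  ⟨y, hc.directedOn.maximal_iff_isGreatest.1 hy⟩

@[simp]
lemma mem_chainsIn {S : Set γ} {b0 : γ} {C : Finset γ} :
    C ∈ chainsIn S b0 ↔ (C : Set γ) ⊆ S ∧ IsChain (· ≤ ·) (C : Set γ) ∧ b0 ∈ C :=
  Iff.rfl

variable [Fintype γ]

lemma upsSet_eq_sum (S : Set γ) (b0 : γ) (m : ℕ) :
    upsSet K S b0 m = ∑ C ∈ (chainsIn S b0).toFinset,
      uWord K m ((fun y => rho y - rho b0) '' (C : Set γ)) :=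
  finsum_mem_eq_toFinset_sum _ _

lemma sum_chainsIn_eq_sum_isGreatest {M : Type} [AddCommMonoid M] (S : Set γ) (b0 : γ)
    (f : Finset γ → M) :
    ∑ C ∈ (chainsIn S b0).toFinset, f C =
      ∑ y ∈ S.toFinset, ∑ C ∈ (chainsIn S b0).toFinset.filter
        (fun C : Finset γ => IsGreatest (C : Set γ) y), f C := by
  rw [sum_comm' (t' := (chainsIn S b0).toFinset)
    (s' := fun C => {y ∈ S.toFinset | IsGreatest (↑C : Set γ) y}) fun _ _ => by simp; tauto]
  refine sum_congr rfl fun C hC => ?_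
  obtain ⟨hCS, hc, hb0⟩ := Set.mem_toFinset.1 hC
  obtain ⟨y, hy⟩ := exists_isGreatest_of_isChain ⟨b0, hb0⟩ hc
  have : {z ∈ S.toFinset | IsGreatest (↑C : Set γ) z} = {y} := by
    ext z
    simp only [mem_filter, Set.mem_toFinset, mem_singleton]
    exact ⟨fun hz => hz.2.unique hy, fun h => h ▸ ⟨hCS hy.1, hy⟩⟩
  rw [this, sum_singleton]

lemma chainsIn_filter_isGreatest_self {S : Set γ} {b0 : γ} (hS : S ⊆ Set.Ici b0) (hb0 : b0 ∈ S) :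
    (chainsIn S b0).toFinset.filter (fun C : Finset γ => IsGreatest (C : Set γ) b0) = {{b0}} := by
  ext C
  simp only [mem_filter, Set.mem_toFinset, mem_singleton, mem_chainsIn]
  constructor
  · rintro ⟨⟨hCS, -, -⟩, hC⟩
    ext z
    simp only [mem_singleton]
    exact ⟨fun hz => le_antisymm (hC.2 hz) (hS (hCS hz)), fun h => h ▸ hC.1⟩
  · rintro rfl
    simpa using hb0

lemma sum_chainsIn_filter_isGreatest {M : Type} [AddCommMonoid M] {S : Set γ} {b0 y : γ}
    (hS : S ⊆ Set.Ici b0) (hyS : Set.Icc b0 y ⊆ S) (hby : b0 < y) (f : Finset γ → M) :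
    ∑ C ∈ (chainsIn S b0).toFinset.filter (fun C : Finset γ => IsGreatest (C : Set γ) y), f C =
      ∑ D ∈ (chainsIn (Set.Ico b0 y) b0).toFinset, f (insert y D) := by
  have hy : y ∉ Set.Ico b0 y := fun h => h.2.false
  refine sum_nbij' (fun C => C.erase y) (insert y) ?_ ?_ ?_ ?_ ?_
  · simp only [mem_filter, Set.mem_toFinset, mem_chainsIn, and_imp]
    intro C hCS hc hb0 hC
    refine ⟨fun z hz => ?_, hc.mono (by simp), mem_erase.2 ⟨hby.ne, hb0⟩⟩
    simp only [coe_erase, Set.mem_sdiff, mem_coe, Set.mem_singleton_iff] at hz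
    exact ⟨hS (hCS hz.1), lt_of_le_of_ne (hC.2 hz.1) hz.2⟩
  · simp only [mem_filter, Set.mem_toFinset, mem_chainsIn, and_imp]
    intro D hDS hc hb0
    refine ⟨⟨?_, ?_, mem_insert_of_mem hb0⟩, by simp, ?_⟩
    · rw [coe_insert, Set.insert_subset_iff]
      exact ⟨hyS ⟨hby.le, le_rfl⟩, hDS.trans (Set.Ico_subset_Icc_self.trans hyS)⟩
    · simpa using hc.insert fun z hz _ => Or.inr (hDS hz).2.le
    · simpa [upperBounds] using fun z hz => (hDS hz).2.le
  · intro C hC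
    exact insert_erase (mem_filter.1 hC).2.1
  · intro D hD
    exact erase_insert fun h => hy ((Set.mem_toFinset.1 hD).1 h)
  · intro C hC
    rw [insert_erase (mem_filter.1 hC).2.1]

lemma uWord_image_insert {b0 y : γ} {D : Finset γ} (hD : D ∈ chainsIn (Set.Ico b0 y) b0)
    {m : ℕ} (hm : rho y - rho b0 ≤ m) :
    uWord K m ((fun z => rho z - rho b0) '' ((insert y D : Finset γ) : Set γ)) =
      uWord K (rho y - rho b0 - 1) ((fun z => rho z - rho b0) '' (D : Set γ)) * lb K *
        la K ^ (m - (rho y - rho b0)) := by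
  have hby : rho b0 < rho y := rho_strictMono (hD.1 hD.2.2).2
  have hDy : ∀ z ∈ D, rho z < rho y := fun z hz => rho_strictMono (hD.1 hz).2
  have hgr : IsGreatest ((fun z => rho z - rho b0) '' ((insert y D : Finset γ) : Set γ))
      (rho y - rho b0) := by
    refine ⟨⟨y, by simp, rfl⟩, ?_⟩
    rintro _ ⟨z, hz, rfl⟩
    rcases mem_insert.1 hz with rfl | hz
    · exact le_rfl
    · have := hDy z hz
      show rho z - rho b0 ≤ rho y - rho b0
      omega
  rw [uWord_of_isGreatest K hgr (by omega) hm]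
  congr 2
  refine uWord_congr K fun i _ hi => ?_
  rw [coe_insert, Set.image_insert_eq, Set.mem_insert_iff, or_iff_right (by omega)]

/-- The flag enumerator of the chains from `b0` to `y`, with ranks relative to `b0`. -/
def upsTo (b0 y : γ) : FA K :=
  if y = b0 then 1 else upsSet K (Set.Ico b0 y) b0 (rho y - rho b0 - 1) * lb K

lemma sum_uWord_filter_isGreatest {S : Set γ} {b0 y : γ} (hS : S ⊆ Set.Ici b0) (hy : y ∈ S)
    (hyS : Set.Icc b0 y ⊆ S) {m : ℕ} (hm : rho y - rho b0 ≤ m) :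
    ∑ C ∈ (chainsIn S b0).toFinset.filter (fun C : Finset γ => IsGreatest (C : Set γ) y),
        uWord K m ((fun z => rho z - rho b0) '' (C : Set γ)) =
      upsTo K b0 y * la K ^ (m - (rho y - rho b0)) := by
  rcases eq_or_lt_of_le (hS hy) with rfl | hby
  · rw [chainsIn_filter_isGreatest_self hS hy, sum_singleton, upsTo, if_pos rfl, one_mul,
      Nat.sub_self, Nat.sub_zero]
    exact uWord_eq_pow K (by simp; omega)
  · rw [sum_chainsIn_filter_isGreatest hS hyS hby, upsTo, if_neg hby.ne', upsSet_eq_sum,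
      sum_mul, sum_mul]
    exact sum_congr rfl fun D hD => uWord_image_insert K (Set.mem_toFinset.1 hD) hm

/-- Sorting the chains of `S` by their greatest element. -/
theorem upsSet_eq_sum_upsTo {S : Set γ} {b0 : γ} (hS : S ⊆ Set.Ici b0)
    (hconv : ∀ y ∈ S, Set.Icc b0 y ⊆ S) {m : ℕ} (hm : ∀ y ∈ S, rho y - rho b0 ≤ m) :
    upsSet K S b0 m = ∑ y ∈ S.toFinset, upsTo K b0 y * la K ^ (m - (rho y - rho b0)) := by
  rw [upsSet_eq_sum, sum_chainsIn_eq_sum_isGreatest]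
  exact sum_congr rfl fun y hy => sum_uWord_filter_isGreatest K hS (Set.mem_toFinset.1 hy)
    (hconv y (Set.mem_toFinset.1 hy)) (hm y (Set.mem_toFinset.1 hy))

end Chains

section Subdivision

open Finset

variable (K : Type) [Field K] {α β : Type} [PartialOrder α] [Fintype α] [OrderBot α]
  [PartialOrder β] [Fintype β]

lemma upsSet_bot_eq_sum {S : Set α} (hS : IsLowerSet S) {m : ℕ} (hm : ∀ y ∈ S, rho y ≤ m) :
    upsSet K S ⊥ m = ∑ y ∈ S.toFinset, upsTo K ⊥ y * la K ^ (m - rho y) := by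
  simpa using upsSet_eq_sum_upsTo K (S := S) (fun _ _ => bot_le) (fun _ hy _ hz => hS hz.2 hy)
    (by simpa using hm)

lemma upsSet_Ico_eq {z x : β} (hzx : z < x) :
    upsSet K (Set.Ico z x) z (rho x - rho z - 1) = la K ^ (rho x - rho z - 1) +
      ∑ u with z < u ∧ u < x,
        upsSet K (Set.Ico z u) z (rho u - rho z - 1) * lb K * la K ^ (rho x - rho u - 1) := by
  rw [upsSet_eq_sum_upsTo K (S := Set.Ico z x) (fun _ hy => hy.1)
      (fun _ hy _ hu => ⟨hu.1, hu.2.trans_lt hy.2⟩)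
      fun y hy => by
        have := rho_mono hy.1
        have := rho_strictMono hy.2
        omega,
    sum_eq_add_sum_sdiff_singleton_of_mem (i := z) (by simpa using hzx), upsTo, if_pos rfl, one_mul,
    Nat.sub_self, Nat.sub_zero]
  refine congrArg _ (sum_congr ?_ fun u hu => ?_)
  · ext u
    simp only [mem_sdiff, Set.mem_toFinset, mem_singleton, Set.mem_Ico, mem_filter_univ,
      lt_iff_le_and_ne, ne_comm (a := z)]
    tauto
  · obtain ⟨hzu, hux⟩ := (mem_filter_univ _).1 hu
    have := rho_strictMono hzu
    have := rho_strictMono hux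
    rw [upsTo, if_neg hzu.ne']
    congr 2
    omega

variable {φ : α → β}

lemma upsSet_preimage_Iic (hmono : Monotone φ) (hrk : ∀ y, rho y ≤ rho (φ y)) (x : β) :
    upsSet K (φ ⁻¹' Set.Iic x) ⊥ (rho x) =
      ∑ y with φ y ≤ x, upsTo K ⊥ y * la K ^ (rho x - rho y) := by
  rw [upsSet_bot_eq_sum K ((isLowerSet_Iic x).preimage hmono)
    fun y hy => (hrk y).trans (rho_mono hy), ← Set.filter_mem_univ_eq_toFinset]
  rfl

lemma upsSet_preimage_Iio (hmono : Monotone φ) (hrk : ∀ y, rho y ≤ rho (φ y)) (x : β) :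
    upsSet K (φ ⁻¹' Set.Iio x) ⊥ (rho x - 1) =
      ∑ y with φ y < x, upsTo K ⊥ y * la K ^ (rho x - 1 - rho y) := by
  rw [upsSet_bot_eq_sum K ((isLowerSet_Iio x).preimage hmono) fun y hy => by
      have := (hrk y).trans_lt (rho_strictMono hy)
      omega,
    ← Set.filter_mem_univ_eq_toFinset]
  rfl

/-- Only the chains whose greatest element lies in the fiber over `z` survive. -/
lemma upsSet_preimage_Iic_sub_Iio (hmono : Monotone φ) (hrk : ∀ y, rho y ≤ rho (φ y))
    {z : β} {r : ℕ} (hz : rho z < r) :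
    upsSet K (φ ⁻¹' Set.Iic z) ⊥ (rho z) * la K ^ (r - rho z - 1) -
        upsSet K (φ ⁻¹' Set.Iio z) ⊥ (rho z - 1) * la K ^ (r - rho z) =
      ∑ y with φ y = z, upsTo K ⊥ y * la K ^ (r - 1 - rho y) := by
  rw [upsSet_preimage_Iic K hmono hrk, upsSet_preimage_Iio K hmono hrk, sum_mul, sum_mul,
    sum_filter, sum_filter, sum_filter, ← sum_sub_distrib]
  refine sum_congr rfl fun y _ => ?_
  rcases eq_or_ne (φ y) z with h | h
  · have : rho y ≤ rho z := h ▸ hrk y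
    rw [if_pos h.le, if_neg h.not_lt, if_pos h, sub_zero, mul_assoc, ← pow_add]
    congr 2
    omega
  · by_cases hlt : φ y < z
    · have := (hrk y).trans_lt (rho_strictMono hlt)
      rw [if_pos hlt.le, if_pos hlt, if_neg h, mul_assoc, mul_assoc, ← pow_add, ← pow_add,
        show rho z - rho y + (r - rho z - 1) = rho z - 1 - rho y + (r - rho z) by omega, sub_self]
    · rw [if_neg fun hle => hlt (hle.lt_of_ne h), if_neg hlt, if_neg h, sub_zero]

/-- `Υ_{Γ_x} - Υ_{∂Γ_x}·c`, which `a ↦ a - b` turns into the local `ab`-index `ℓ^Ψ_{Γ_x}`. -/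
def localUps (φ : α → β) (x : β) : FA K :=
  upsSet K (φ ⁻¹' Set.Iic x) ⊥ (rho x) - upsSet K (φ ⁻¹' Set.Iio x) ⊥ (rho x - 1) * lc K

/-- The flag enumerator of the interval `[z, x]` of `B`. -/
def intervalUps (z x : β) : FA K :=
  upsSet K (Set.Ico z x) z (rho x - rho z - 1)

/-- Induction on `x`: expand `Υ_{[z,x]}` by the greatest element of a chain below `x`, apply
the induction hypothesis to the inner sums, and telescope over the fibers of `φ`. -/
theorem sum_localUps_mul_intervalUps (hmono : Monotone φ) (hrk : ∀ y, rho y ≤ rho (φ y))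
    (x : β) :
    ∑ z with z < x, localUps K φ z * intervalUps K z x =
      upsSet K (φ ⁻¹' Set.Iio x) ⊥ (rho x - 1) := by
  induction x using WellFoundedLT.induction with
  | _ x ih =>
  calc ∑ z with z < x, localUps K φ z * intervalUps K z x
      = ∑ z with z < x, (localUps K φ z * la K ^ (rho x - rho z - 1) +
          ∑ u with z < u ∧ u < x,
            localUps K φ z * intervalUps K z u * (lb K * la K ^ (rho x - rho u - 1))) := by
        refine sum_congr rfl fun z hz => ?_
        rw [intervalUps, upsSet_Ico_eq K (by simpa using hz : z < x), mul_add, mul_sum]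
        simp only [intervalUps, mul_assoc]
    _ = ∑ z with z < x, localUps K φ z * la K ^ (rho x - rho z - 1) +
          ∑ u with u < x, (∑ z with z < u, localUps K φ z * intervalUps K z u) *
            (lb K * la K ^ (rho x - rho u - 1)) := by
        simp only [sum_add_distrib, sum_mul]
        congr 1
        refine sum_comm' fun z u => ?_
        simp only [mem_filter_univ]
        exact ⟨fun h => ⟨h.2.1, h.2.2⟩, fun h => ⟨h.1.trans h.2, h⟩⟩
    _ = ∑ z with z < x, (upsSet K (φ ⁻¹' Set.Iic z) ⊥ (rho z) * la K ^ (rho x - rho z - 1) -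
          upsSet K (φ ⁻¹' Set.Iio z) ⊥ (rho z - 1) * la K ^ (rho x - rho z)) := by
        rw [← sum_add_distrib]
        refine sum_congr rfl fun z hz => ?_
        have hzx : z < x := by simpa using hz
        have := rho_strictMono hzx
        rw [ih z hzx, localUps, lc, show rho x - rho z = rho x - rho z - 1 + 1 by omega,
          pow_succ']
        noncomm_ring
    _ = ∑ z with z < x, ∑ y with φ y = z, upsTo K ⊥ y * la K ^ (rho x - 1 - rho y) :=
        sum_congr rfl fun z hz =>
          upsSet_preimage_Iic_sub_Iio K hmono hrk (rho_strictMono (by simpa using hz : z < x))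
    _ = ∑ y with φ y < x, upsTo K ⊥ y * la K ^ (rho x - 1 - rho y) := by
        rw [sum_comm' (t' := {y | φ y < x}) (s' := fun y => {φ y}) fun z y => by
          simp only [mem_filter_univ, mem_singleton]
          exact ⟨fun h => ⟨h.2.symm, h.2 ▸ h.1⟩, fun h => ⟨h.1 ▸ h.2, h.1.symm⟩⟩]
        simp only [sum_singleton]
    _ = upsSet K (φ ⁻¹' Set.Iio x) ⊥ (rho x - 1) := (upsSet_preimage_Iio K hmono hrk x).symm

lemma toAB_lc : toAB K (lc K) = la K := by
  simp [toAB, lc, la, lb]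

theorem sum_psiS_local_mul_psiS_Ico (hmono : Monotone φ) (hrk : ∀ y, rho y ≤ rho (φ y))
    (x : β) :
    ∑ z with z < x,
        (psiS K (φ ⁻¹' Set.Iic z) ⊥ (rho z) - psiS K (φ ⁻¹' Set.Iio z) ⊥ (rho z - 1) * la K) *
          psiS K (Set.Ico z x) z (rho x - rho z - 1) =
      psiS K (φ ⁻¹' Set.Iio x) ⊥ (rho x - 1) := by
  simpa [localUps, intervalUps, psiS, toAB_lc] using
    congrArg (toAB K) (sum_localUps_mul_intervalUps K hmono hrk x)

end Subdivision

section Boundary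

variable {α β : Type} [PartialOrder α] [Finite α] [PartialOrder β] [Finite β] [OrderTop β]
  {n : ℕ} {φ : α → β}

lemma IsGradedOfRank.eq_top_of_le_rho (hG : IsGradedOfRank β n) {w : β} (hw : n ≤ rho w) :
    w = ⊤ := by
  by_contra h
  have := rho_strictMono (lt_top_iff_ne_top.2 h)
  rw [hG.rho_top] at this
  omega

lemma fiber_top_eq (hGα : IsGradedOfRank α n) (hGβ : IsGradedOfRank β n)
    (hrk : ∀ y, rho y ≤ rho (φ y)) {x : α} (hx : rho x = n - 1) :
    {y | φ y = ⊤ ∧ x ≤ y} = {y | y = x ∧ φ x = ⊤} ∪ {z | x ⋖ z} := by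
  ext y
  constructor
  · rintro ⟨hy, hxy⟩
    rcases hxy.eq_or_lt with rfl | hlt
    · exact Or.inl ⟨rfl, hy⟩
    · exact Or.inr (hGα.covBy_of_rho_eq hx hlt).1
  · rintro (⟨rfl, h⟩ | hcov)
    · exact ⟨h, le_rfl⟩
    · obtain ⟨-, hy⟩ := hGα.covBy_of_rho_eq hx hcov.lt
      exact ⟨hGβ.eq_top_of_le_rho (hy ▸ hrk y), hcov.le⟩

/-- The alternating-sum condition over `x ≤ 1̂` counts the covers of `x`. -/
lemma ncard_covBy_eq_one_iff (hGα : IsGradedOfRank α n) (hGβ : IsGradedOfRank β n)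
    (hφ : IsSFS φ) {x : α} (hx : rho x = n - 1) :
    {z | x ⋖ z}.ncard = 1 ↔ φ x ≠ ⊤ := by
  obtain ⟨-, hrk, -, -, hsum⟩ := hφ
  have h := hsum x ⊤ le_top
  have hcov : ∑ᶠ z ∈ {z | x ⋖ z}, (-1 : ℤ) ^ rho z = {z | x ⋖ z}.ncard * (-1) ^ n := by
    rw [finsum_mem_congr rfl fun z hz => by rw [(hGα.covBy_of_rho_eq hx hz.lt).2],
      finsum_mem_eq_finite_toFinset_sum _ (Set.toFinite _), Finset.sum_const,
      ← Set.ncard_eq_toFinset_card _, nsmul_eq_mul]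
  rw [fiber_top_eq hGα hGβ hrk hx, finsum_mem_union
      (Set.disjoint_left.2 fun y hy hxy => hxy.lt.ne hy.1.symm) (Set.toFinite _) (Set.toFinite _),
    hcov, hGβ.rho_top] at h
  have hpow : ((-1 : ℤ) ^ n) ≠ 0 := pow_ne_zero _ (by norm_num)
  by_cases hφx : φ x = ⊤
  · simp only [hφx, and_true, Set.ofPred_eq_eq_singleton, finsum_mem_singleton, hx] at h
    refine iff_of_false (fun h1 => pow_ne_zero (n - 1) (by norm_num : (-1 : ℤ) ≠ 0) ?_) (· hφx)
    rw [h1, Nat.cast_one] at h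
    linear_combination h
  · simp only [hφx, and_false, Set.ofPred_false, finsum_mem_empty, zero_add] at h
    refine iff_of_true ?_ hφx
    exact_mod_cast mul_right_cancel₀ hpow (h.trans (one_mul _).symm)

theorem boundary_eq_preimage_Iio (hGα : IsGradedOfRank α n) (hGβ : IsGradedOfRank β n)
    (hφ : IsSFS φ) : boundary α n = φ ⁻¹' Set.Iio ⊤ := by
  ext y
  simp only [boundary, boundaryIn, Set.mem_univ, true_and, Set.mem_ofPred_eq,
    Set.mem_preimage, Set.mem_Iio]
  constructor
  · rintro ⟨x, hx, hcov, hyx⟩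
    exact (hφ.1 hyx).trans_lt
      (lt_top_iff_ne_top.2 ((ncard_covBy_eq_one_iff hGα hGβ hφ hx).1 hcov))
  · intro hy
    obtain ⟨w, hyw, hw⟩ := exists_le_covBy_of_lt hy
    obtain ⟨x, hyx, rfl, hx⟩ := hφ.2.2.2.1 y w hyw
    rw [hGβ.rho_of_covBy_top hw] at hx
    exact ⟨x, hx, (ncard_covBy_eq_one_iff hGα hGβ hφ hx).2 hw.lt.ne, hyx⟩

end Boundary

section ReAlgebra

variable (K : Type) [Field K]

lemma eE_mul_eE : eE K * eE K = 0 := by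
  rw [eE, mkRe, ← map_mul, RingQuot.mkAlgHom_rel K ERel.ee, map_zero]

lemma eE_mul_eA : eE K * eA K = 0 := by
  rw [eE, eA, mkRe, ← map_mul, RingQuot.mkAlgHom_rel K ERel.ea, map_zero]

lemma eE_mul_eB : eE K * eB K = 0 := by
  rw [eE, eB, mkRe, ← map_mul, RingQuot.mkAlgHom_rel K ERel.eb, map_zero]

lemma eA_mul_eE : eA K * eE K = 0 := by
  rw [eA, eE, mkRe, ← map_mul, RingQuot.mkAlgHom_rel K ERel.ae, map_zero]

lemma eB_mul_eE : eB K * eE K = 0 := by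
  rw [eB, eE, mkRe, ← map_mul, RingQuot.mkAlgHom_rel K ERel.be, map_zero]

lemma abToRe_cdToAB (p : FA K) : abToRe K (cdToAB K p) = cdToRe K p := by
  rw [← AlgHom.comp_apply]
  congr 1
  ext i
  fin_cases i <;> simp [abToRe, cdToAB, cdToRe, lc, ld, la, lb, eC, eD]

/-- `e` annihilates the augmentation ideal `(a, b)` on both sides. -/
lemma eE_mul_abToRe (p : FA K) :
    eE K * abToRe K p = FreeAlgebra.algebraMapInv p • eE K ∧
      abToRe K p * eE K = FreeAlgebra.algebraMapInv p • eE K := by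
  induction p using FreeAlgebra.induction with
  | grade0 r => simp [Algebra.smul_def, Algebra.commutes]
  | grade1 i =>
    fin_cases i <;>
      simp [abToRe, FreeAlgebra.algebraMapInv, eE_mul_eA, eA_mul_eE, eE_mul_eB, eB_mul_eE]
  | mul p q hp hq =>
    rw [map_mul, map_mul, ← mul_assoc, hp.1, smul_mul_assoc, hq.1, smul_smul, mul_assoc, hq.2,
      mul_smul_comm, hp.2, smul_smul, mul_comm (FreeAlgebra.algebraMapInv q)]
    exact ⟨rfl, rfl⟩
  | add p q hp hq =>
    simp only [map_add, mul_add, add_mul, hp.1, hp.2, hq.1, hq.2, add_smul, and_self]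

lemma exists_eq_cdToRe_add_smul_eE (z : RePhi K) :
    ∃ (p : FA K) (t : K), (z : ReP K) = cdToRe K p + t • eE K := by
  refine Algebra.adjoin_induction
    (p := fun x _ => ∃ (p : FA K) (t : K), x = cdToRe K p + t • eE K) ?_
    (fun r => ⟨algebraMap K _ r, 0, by simp⟩) ?_ ?_ z.2
  · rintro x (rfl | rfl | rfl)
    · exact ⟨FreeAlgebra.ι K 0, 0, by simp [cdToRe]⟩
    · exact ⟨FreeAlgebra.ι K 1, 0, by simp [cdToRe]⟩
    · exact ⟨0, 1, by simp⟩
  · rintro x y - - ⟨p, s, rfl⟩ ⟨q, t, rfl⟩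
    exact ⟨p + q, s + t, by rw [map_add, add_smul]; abel⟩
  · rintro x y - - ⟨p, s, rfl⟩ ⟨q, t, rfl⟩
    refine ⟨p * q, t * FreeAlgebra.algebraMapInv (cdToAB K p) +
      s * FreeAlgebra.algebraMapInv (cdToAB K q), ?_⟩
    have hp := eE_mul_abToRe K (cdToAB K p)
    have hq := eE_mul_abToRe K (cdToAB K q)
    rw [abToRe_cdToAB] at hp hq
    simp only [map_mul, add_mul, mul_add, mul_smul_comm, smul_mul_assoc, hp.2, hq.1, eE_mul_eE,
      smul_zero, add_zero, add_smul, smul_smul]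
    abel

/-- Separates the `a, b`-part of an element of `R^e_Ψ` from its `e`-coefficient. -/
def splitE : ReP K →ₐ[K] FA K × DualNumber K :=
  RingQuot.liftAlgHom K ⟨FreeAlgebra.lift K ![(la K, 0), (lb K, 0), (0, DualNumber.eps)], by
    rintro _ _ ⟨⟩ <;> simp [Prod.ext_iff]⟩

lemma splitE_abToRe (p : FA K) :
    splitE K (abToRe K p) = (p, algebraMap K _ (FreeAlgebra.algebraMapInv p)) := by
  rw [← AlgHom.comp_apply, show (splitE K).comp (abToRe K) =
      (AlgHom.id K _).prod ((Algebra.ofId K _).comp FreeAlgebra.algebraMapInv) by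
    ext i <;> fin_cases i <;>
      simp [splitE, abToRe, eA, eB, mkRe, la, lb, FreeAlgebra.algebraMapInv]]
  rfl

lemma splitE_eE : splitE K (eE K) = (0, DualNumber.eps) := by
  simp [splitE, eE, mkRe]

theorem IsESpecialization.apply_of_coe_eq_abToRe {sp2 : RePhi K →ₗ[K] FA K}
    (hsp : IsESpecialization K sp2) {z : RePhi K} {q : FA K} (hz : (z : ReP K) = abToRe K q) :
    sp2 z = q := by
  obtain ⟨p, t, hpt⟩ := exists_eq_cdToRe_add_smul_eE K z
  have h := congrArg (splitE K) (hpt.symm.trans hz)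
  rw [map_add, map_smul, ← abToRe_cdToAB, splitE_abToRe, splitE_abToRe, splitE_eE] at h
  obtain ⟨hp, ht⟩ := Prod.ext_iff.1 h
  have hp : cdToAB K p = q := by simpa using hp
  have ht0 : t = 0 := by
    simpa [TrivSqZeroExt.algebraMap_eq_inl] using congrArg TrivSqZeroExt.snd ht
  rw [ht0, zero_smul, add_zero] at hpt
  exact (hsp.2 z p hpt).trans hp

end ReAlgebra

theorem mixedCdIndex_specializes_to_cdIndex_general
    (K : Type) [Field K]
    (α β : Type) [PartialOrder α] [Finite α] [OrderBot α]
    [PartialOrder β] [Finite β] [OrderTop β] (n : ℕ)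
    (hΓ : IsLowerEulerianOfRank α n) (hB : IsEulerianOfRank β n)
    (φ : α → β) (hφ : IsSFS φ)
    (L : β → FA K) (hL : IsLocalCdFamily K φ L)
    (P : β → β → RePhi K) (hP : IsIntervalCdFamily K P)
    (sp2 : RePhi K →ₗ[K] FA K) (hsp : IsESpecialization K sp2) :
    (LinearMap.mul' K (FA K))
        ((TensorProduct.map (cdToAB K).toLinearMap sp2)
          (∑ᶠ x : β, L x ⊗ₜ[K] P x ⊤))
      = psiS K (Set.univ : Set α) ⊥ n
          - psiS K (boundary α n) ⊥ (n - 1) * la K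
          + psiS K (boundary α n) ⊥ (n - 1) := by
  have := Fintype.ofFinite α
  have := Fintype.ofFinite β
  have hGβ : IsGradedOfRank β n := hB.2.2.1
  rw [finsum_eq_sum_of_fintype, map_sum, map_sum, ← Finset.add_sum_erase _ _ (Finset.mem_univ ⊤)]
  simp only [TensorProduct.map_tmul, LinearMap.mul'_apply, AlgHom.toLinearMap_apply]
  rw [(hP ⊤ ⊤).1 rfl, hsp.1, mul_one, hL ⊤, boundary_eq_preimage_Iio hΓ.2.1 hGβ hφ,
    ← hGβ.rho_top, Set.Iic_top, Set.preimage_univ]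
  congr 1
  rw [← sum_psiS_local_mul_psiS_Ico K hφ.1 hφ.2.1 ⊤]
  refine Finset.sum_congr (by ext; simp [lt_top_iff_ne_top]) fun x hx => ?_
  rw [hL x, hsp.apply_of_coe_eq_abToRe K ((hP x ⊤).2 (by simpa using hx))]

/-- Let `φ : Γ → B` be a strong formal subdivision of rank `0`, `Γ`
lower Eulerian and `B` Eulerian (of rank `n`).  Under the specialization
`c' ↦ c, d' ↦ d, e ↦ 1`, the mixed `cd`-index
`Ω_φ = ∑_{x ∈ B} ℓ^Φ_{Γ_x}(c', d') ⊗ Φ_{[x, 1̂]}(c, d, e) ∈ R_Ω`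
specializes to the `cd`-index `Φ_Γ = ℓ^Φ_Γ + Φ_{∂Γ} = (Ψ_Γ - Ψ_{∂Γ}·a) + Ψ_{∂Γ}`
of `Γ`. -/
theorem mixedCdIndex_specializes_to_cdIndex
    (K : Type) [Field K] [CharZero K]
    (α β : Type) [PartialOrder α] [Finite α] [OrderBot α]
    [PartialOrder β] [Finite β] [OrderBot β] [OrderTop β] (n : ℕ)
    (hΓ : IsLowerEulerianOfRank α n) (hB : IsEulerianOfRank β n)
    (φ : α → β) (hφ : IsSFS φ)
    (L : β → FA K) (hL : IsLocalCdFamily K φ L)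
    (P : β → β → RePhi K) (hP : IsIntervalCdFamily K P)
    (sp2 : RePhi K →ₗ[K] FA K) (hsp : IsESpecialization K sp2) :
    (LinearMap.mul' K (FA K))
        ((TensorProduct.map (cdToAB K).toLinearMap sp2)
          (∑ᶠ x : β, L x ⊗ₜ[K] P x ⊤))
      = psiS K (Set.univ : Set α) ⊥ n
          - psiS K (boundary α n) ⊥ (n - 1) * la K
          + psiS K (boundary α n) ⊥ (n - 1) :=
  mixedCdIndex_specializes_to_cdIndex_general K α β n hΓ hB φ hφ L hL P hP sp2 hsp

end CDIndex
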